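/- SLT Separation Proposition: Let s1 and s2 be terms of the second-order linear term system SLT with s1 ≠ s2 (as syntactic terms). Then there exist a variable assignment ρ1 and a second-order variable assignment ρ2 such that [|s1|]_{ρ1,ρ2} ≠ [|s2|]_{ρ1,ρ2}. -/

import Mathlib

/-! The second-order linear term system SLT. First-order variables and second-order
variables are both indexed by natural numbers; an arity function assigns each
second-order variable its arity. -/

mutual
/-- Terms of the second-order linear term system. -/
inductive SLT : Type
  | fvar : ℕ → SLT
  | sapp : ℕ → SLTList → SLT

/-- Lists of SLT terms (argument vectors). -/
inductive SLTList : Type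
  | nil : SLTList
  | cons : SLT → SLTList → SLTList
end

mutual
/-- First-order variables occurring in an SLT term. -/
def SLT.fvars : SLT → Finset ℕ
  | .fvar x => {x}
  | .sapp _ ts => ts.fvars

def SLTList.fvars : SLTList → Finset ℕ
  | .nil => ∅
  | .cons t ts => t.fvars ∪ ts.fvars
end

mutual
/-- Second-order variables occurring in an SLT term. -/
def SLT.svars : SLT → Finset ℕ
  | .fvar _ => ∅
  | .sapp G ts => insert G ts.svars

def SLTList.svars : SLTList → Finset ℕ
  | .nil => ∅
  | .cons t ts => t.svars ∪ ts.svars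
end

def SLTList.length : SLTList → ℕ
  | .nil => 0
  | .cons _ ts => ts.length + 1

def SLTList.toList : SLTList → List SLT
  | .nil => []
  | .cons t ts => t :: ts.toList

mutual
/-- Well-formedness (linearity): in `G(t1,...,tn)` the number of arguments is the arity
of `G`, `G` occurs in no `ti`, and the `ti` have pairwise disjoint (first- and
second-order) variables. -/
def SLT.wf (arity : ℕ → ℕ) : SLT → Prop
  | .fvar _ => True
  | .sapp G ts => ts.length = arity G ∧ G ∉ ts.svars ∧ ts.pairwiseDisjoint ∧ ts.wf arity

def SLTList.wf (arity : ℕ → ℕ) : SLTList → Prop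
  | .nil => True
  | .cons t ts => t.wf arity ∧ ts.wf arity

def SLTList.pairwiseDisjoint : SLTList → Prop
  | .nil => True
  | .cons t ts =>
      (Disjoint (t.fvars ∪ t.svars) (ts.fvars ∪ ts.svars)) ∧ ts.pairwiseDisjoint
end

mutual
/-- Interpretation of an SLT term for assignments `ρ1 : Var → {0,1}` and
`ρ2 : SVar → ({0,1}* → {0,1})`. -/
def SLT.interp (ρ1 : ℕ → Bool) (ρ2 : ℕ → List Bool → Bool) : SLT → Bool
  | .fvar x => ρ1 x
  | .sapp G ts => ρ2 G (ts.interp ρ1 ρ2)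

def SLTList.interp (ρ1 : ℕ → Bool) (ρ2 : ℕ → List Bool → Bool) : SLTList → List Bool
  | .nil => []
  | .cons t ts => t.interp ρ1 ρ2 :: ts.interp ρ1 ρ2
end

/-- `h` acts on boolean vectors of length `n` as a constant function or as a
(positive) projection. -/
def IsConstOrProj (n : ℕ) (h : List Bool → Bool) : Prop :=
  (∃ b : Bool, ∀ bs : List Bool, bs.length = n → h bs = b) ∨
  (∃ i : Fin n, ∀ bs : List Bool, bs.length = n → h bs = bs.getD i.1 false)


/-! Induction on the first term. Two variables, a variable and an application, or two
applications with different heads are told apart by constant functions alone. If both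
terms are `G(t₁,…,tₙ)` and `G(u₁,…,uₙ)`, pick an argument position `i` with `tᵢ ≠ uᵢ`,
separate `tᵢ` from `uᵢ` by induction, and then reassign `G` to the `i`-th projection:
since `G` occurs in no argument, this does not change the values of the arguments. -/

def SLT.Separable (arity : ℕ → ℕ) (s1 s2 : SLT) : Prop :=
  ∃ (ρ1 : ℕ → Bool) (ρ2 : ℕ → List Bool → Bool),
    (∀ G, IsConstOrProj (arity G) (ρ2 G)) ∧ s1.interp ρ1 ρ2 ≠ s2.interp ρ1 ρ2

theorem IsConstOrProj.const (n : ℕ) (b : Bool) : IsConstOrProj n fun _ => b :=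
  Or.inl ⟨b, fun _ _ => rfl⟩

theorem IsConstOrProj.proj {n : ℕ} (i : Fin n) : IsConstOrProj n fun bs => bs.getD i false :=
  Or.inr ⟨i, fun _ _ => rfl⟩

mutual
theorem SLT.interp_congr (ρ1 : ℕ → Bool) {ρ2 ρ2' : ℕ → List Bool → Bool} :
    ∀ t : SLT, (∀ G ∈ t.svars, ρ2 G = ρ2' G) → t.interp ρ1 ρ2 = t.interp ρ1 ρ2'
  | .fvar _, _ => rfl
  | .sapp G ts, h => by
      have hG : ρ2 G = ρ2' G := h G (by simp [SLT.svars])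
      have hts := SLTList.interp_congr ρ1 ts fun H hH => h H (by simp [SLT.svars, hH])
      simp only [SLT.interp, hts, hG]

theorem SLTList.interp_congr (ρ1 : ℕ → Bool) {ρ2 ρ2' : ℕ → List Bool → Bool} :
    ∀ ts : SLTList, (∀ G ∈ ts.svars, ρ2 G = ρ2' G) → ts.interp ρ1 ρ2 = ts.interp ρ1 ρ2'
  | .nil, _ => rfl
  | .cons t ts, h => by
      have ht := SLT.interp_congr ρ1 t fun H hH => h H (by simp [SLTList.svars, hH])
      have hts := SLTList.interp_congr ρ1 ts fun H hH => h H (by simp [SLTList.svars, hH])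
      simp only [SLTList.interp, ht, hts]
end

namespace SLTList

theorem length_toList : ∀ ts : SLTList, ts.toList.length = ts.length
  | .nil => rfl
  | .cons _ ts => by simp [toList, length, length_toList ts]

theorem toList_injective : Function.Injective toList
  | .nil, .nil, _ => rfl
  | .nil, .cons _ _, h => by simp [toList] at h
  | .cons _ _, .nil, h => by simp [toList] at h
  | .cons t ts, .cons u us, h => by
      simp only [toList, List.cons.injEq] at h
      rw [h.1, toList_injective h.2]

theorem interp_eq_map (ρ1 : ℕ → Bool) (ρ2 : ℕ → List Bool → Bool) :
    ∀ ts : SLTList, ts.interp ρ1 ρ2 = ts.toList.map (SLT.interp ρ1 ρ2)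
  | .nil => rfl
  | .cons t ts => by simp [interp, toList, interp_eq_map ρ1 ρ2 ts]

theorem wf_of_mem_toList {arity : ℕ → ℕ} :
    ∀ {ts : SLTList}, ts.wf arity → ∀ t ∈ ts.toList, t.wf arity
  | .cons u ts, h, t, ht => by
      rcases List.mem_cons.mp ht with rfl | ht
      · exact h.1
      · exact wf_of_mem_toList h.2 t ht

theorem sizeOf_lt_of_mem_toList : ∀ {ts : SLTList}, ∀ t ∈ ts.toList, sizeOf t < sizeOf ts
  | .cons u ts, t, ht => by
      rcases List.mem_cons.mp ht with rfl | ht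
      · simp only [cons.sizeOf_spec]; omega
      · have := sizeOf_lt_of_mem_toList t ht
        simp only [cons.sizeOf_spec]; omega

theorem exists_getElem?_ne_of_ne {ts us : SLTList} (hlen : ts.length = us.length)
    (hne : ts ≠ us) :
    ∃ (i : ℕ) (t u : SLT), ts.toList[i]? = some t ∧ us.toList[i]? = some u ∧ t ≠ u := by
  have hlen' : ts.toList.length = us.toList.length := by
    rw [length_toList, length_toList, hlen]
  by_contra! hall
  refine hne (toList_injective (List.ext_getElem hlen' fun i hi hi' => ?_))
  exact hall i _ _ (List.getElem?_eq_getElem hi) (List.getElem?_eq_getElem hi')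

end SLTList

namespace SLT

theorem interp_sapp_update_proj {ρ1 : ℕ → Bool} {ρ2 : ℕ → List Bool → Bool} {G i : ℕ}
    {ts : SLTList} {t : SLT} (hG : G ∉ ts.svars) (ht : ts.toList[i]? = some t) :
    (sapp G ts).interp ρ1 (Function.update ρ2 G fun bs => bs.getD i false) =
      t.interp ρ1 ρ2 := by
  have hargs : ts.interp ρ1 (Function.update ρ2 G fun bs => bs.getD i false) =
      ts.interp ρ1 ρ2 :=
    SLTList.interp_congr ρ1 ts fun K hK =>
      Function.update_of_ne (fun h : K = G => hG (h ▸ hK)) _ _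
  rw [interp, hargs, Function.update_self, SLTList.interp_eq_map,
    List.getD_eq_getElem?_getD, List.getElem?_map, ht]
  rfl

section Separable

variable {arity : ℕ → ℕ}

theorem Separable.symm {s1 s2 : SLT} : Separable arity s1 s2 → Separable arity s2 s1
  | ⟨ρ1, ρ2, hρ2, hne⟩ => ⟨ρ1, ρ2, hρ2, hne.symm⟩

theorem separable_fvar_fvar {x y : ℕ} (hxy : x ≠ y) : Separable arity (fvar x) (fvar y) :=
  ⟨fun z => decide (z = x), fun _ _ => false, fun _ => .const _ _, by simp [interp, hxy.symm]⟩

theorem separable_fvar_sapp (x G : ℕ) (ts : SLTList) : Separable arity (fvar x) (sapp G ts) :=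
  ⟨fun _ => true, fun _ _ => false, fun _ => .const _ _, by simp [interp]⟩

theorem separable_sapp_sapp_of_ne {G H : ℕ} (hGH : G ≠ H) (ts us : SLTList) :
    Separable arity (sapp G ts) (sapp H us) :=
  ⟨fun _ => false, fun K _ => decide (K = G), fun _ => .const _ _, by simp [interp, hGH.symm]⟩

theorem Separable.sapp {G i : ℕ} {ts us : SLTList} {t u : SLT} (hi : i < arity G)
    (hGts : G ∉ ts.svars) (hGus : G ∉ us.svars)
    (ht : ts.toList[i]? = some t) (hu : us.toList[i]? = some u)
    (htu : Separable arity t u) : Separable arity (sapp G ts) (sapp G us) := by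
  obtain ⟨ρ1, ρ2, hρ2, hne⟩ := htu
  refine ⟨ρ1, Function.update ρ2 G fun bs => bs.getD i false, fun K => ?_, ?_⟩
  · rcases eq_or_ne K G with rfl | hK
    · simpa using IsConstOrProj.proj ⟨i, hi⟩
    · simpa [Function.update_of_ne hK] using hρ2 K
  · rwa [interp_sapp_update_proj hGts ht, interp_sapp_update_proj hGus hu]

theorem separable_of_ne :
    ∀ {s1 s2 : SLT}, s1.wf arity → s2.wf arity → s1 ≠ s2 → Separable arity s1 s2
  | .fvar _, .fvar _, _, _, hne => separable_fvar_fvar fun h => hne (h ▸ rfl)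
  | .fvar _, .sapp _ _, _, _, _ => separable_fvar_sapp _ _ _
  | .sapp _ _, .fvar _, _, _, _ => (separable_fvar_sapp _ _ _).symm
  | .sapp G ts, .sapp H us, h1, h2, hne => by
      rcases eq_or_ne G H with rfl | hGH
      · obtain ⟨i, t, u, ht, hu, htu⟩ := SLTList.exists_getElem?_ne_of_ne
          (h1.1.trans h2.1.symm) fun h => hne (h ▸ rfl)
        have htmem : t ∈ ts.toList := List.mem_of_getElem? ht
        have hi : i < arity G := by
          rw [← h1.1, ← SLTList.length_toList]
          exact (List.getElem?_eq_some_iff.mp ht).1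
        exact .sapp hi h1.2.1 h2.2.1 ht hu <|
          separable_of_ne (SLTList.wf_of_mem_toList h1.2.2.2 t htmem)
            (SLTList.wf_of_mem_toList h2.2.2.2 u (List.mem_of_getElem? hu)) htu
      · exact separable_sapp_sapp_of_ne hGH ts us
termination_by s1 => sizeOf s1
decreasing_by
  have := SLTList.sizeOf_lt_of_mem_toList t htmem
  simp only [SLT.sapp.sizeOf_spec]
  omega

end Separable

end SLT

/-- **SLT Separation Proposition.** Syntactically distinct well-formed SLT terms can be
separated by a variable assignment together with a second-order variable assignment
sending each second-order variable to a constant or projection function. -/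
theorem slt_separation (arity : ℕ → ℕ) (harity : ∀ G, 1 ≤ arity G)
    (s1 s2 : SLT) (h1 : s1.wf arity) (h2 : s2.wf arity) (hne : s1 ≠ s2) :
    ∃ (ρ1 : ℕ → Bool) (ρ2 : ℕ → List Bool → Bool),
      (∀ G, IsConstOrProj (arity G) (ρ2 G)) ∧
      s1.interp ρ1 ρ2 ≠ s2.interp ρ1 ρ2 :=
  SLT.separable_of_ne h1 h2 hne
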